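/- The adjoint of the partitioned AVF method is again energy-preserving: if H : ℝ^d × ℝ^d → ℝ is C¹, S is skew-symmetric, τ ≠ 0, and (p^{n+1},q^{n+1}) satisfies (1/τ)((p^{n+1}-p^n),(q^{n+1}-q^n)) = S·(∫₀¹ H_p(ξp^{n+1}+(1-ξ)p^n, q^{n+1}) dξ, ∫₀¹ H_q(p^n, ξq^{n+1}+(1-ξ)q^n) dξ), then H(p^{n+1},q^{n+1}) = H(p^n,q^n). -/

import Mathlib

/-!
Along the path `(p⁰, q⁰) → (p⁰, q¹) → (p¹, q¹)` each leg moves only one block of variables, and by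
the fundamental theorem of calculus on that segment the change of `H` on it is the increment of
that block paired with the averaged partial gradient appearing in the scheme. Hence, with `v` the
vector of both averaged gradients, the total change of `H` is `Δ ⬝ᵥ v` for the increment
`Δ = τ • S *ᵥ v`, and `v ⬝ᵥ S *ᵥ v = 0` because `S` is skew-symmetric.
-/

open MeasureTheory Matrix

section Segment

variable {E F : Type*} [NormedAddCommGroup E] [NormedSpace ℝ E]
  [NormedAddCommGroup F] [NormedSpace ℝ F]

theorem hasDerivAt_segment (a b : E) (ξ : ℝ) :
    HasDerivAt (fun t : ℝ => t • b + (1 - t) • a) (b - a) ξ := by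
  convert AffineMap.hasDerivAt_lineMap (a := a) (b := b) (x := ξ) using 1
  ext t
  rw [AffineMap.lineMap_apply_module, add_comm]

theorem continuous_fderiv_segment {G : E → F} (hG : ContDiff ℝ 1 G) (a b : E) :
    Continuous fun ξ : ℝ => fderiv ℝ G (ξ • b + (1 - ξ) • a) :=
  (hG.continuous_fderiv one_ne_zero).comp (by fun_prop)

variable [CompleteSpace F]

theorem integral_fderiv_segment {G : E → F} (hG : ContDiff ℝ 1 G) (a b : E) :
    ∫ ξ in (0:ℝ)..1, fderiv ℝ G (ξ • b + (1 - ξ) • a) (b - a) = G b - G a := by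
  have hderiv (ξ : ℝ) : HasDerivAt (fun t : ℝ => G (t • b + (1 - t) • a))
      (fderiv ℝ G (ξ • b + (1 - ξ) • a) (b - a)) ξ :=
    ((hG.differentiable one_ne_zero) _).hasFDerivAt.comp_hasDerivAt ξ (hasDerivAt_segment a b ξ)
  rw [intervalIntegral.integral_eq_sub_of_hasDerivAt (fun ξ _ => hderiv ξ)
    (((continuous_fderiv_segment hG a b).clm_apply continuous_const).intervalIntegrable 0 1)]
  simp

end Segment

theorem ContinuousLinearMap.apply_eq_sum_mul_single {ι : Type*} [Fintype ι] [DecidableEq ι]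
    (L : (ι → ℝ) →L[ℝ] ℝ) (x : ι → ℝ) : L x = ∑ i, x i * L (Pi.single i 1) := by
  conv_lhs => rw [pi_eq_sum_univ' x]
  simp [map_sum, map_smul]

theorem sub_eq_dotProduct_integral_fderiv_single {ι : Type*} [Fintype ι] [DecidableEq ι]
    {G : (ι → ℝ) → ℝ} (hG : ContDiff ℝ 1 G) (a b : ι → ℝ) :
    G b - G a =
      (b - a) ⬝ᵥ fun i => ∫ ξ in (0:ℝ)..1, fderiv ℝ G (ξ • b + (1 - ξ) • a) (Pi.single i 1) := by
  have hint := (continuous_fderiv_segment hG a b).intervalIntegrable (μ := volume) 0 1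
  simp_rw [← integral_fderiv_segment hG a b, ← ContinuousLinearMap.intervalIntegral_apply hint]
  exact ContinuousLinearMap.apply_eq_sum_mul_single _ _

section PartialDerivative

variable {E F G : Type*} [NormedAddCommGroup E] [NormedSpace ℝ E]
  [NormedAddCommGroup F] [NormedSpace ℝ F] [NormedAddCommGroup G] [NormedSpace ℝ G]

theorem fderiv_comp_prodMk_left_apply {H : E × F → G} {x : E} {y : F}
    (hH : DifferentiableAt ℝ H (x, y)) (v : E) :
    fderiv ℝ (fun x => H (x, y)) x v = fderiv ℝ H (x, y) (v, 0) := by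
  have h : HasFDerivAt (fun x => H (x, y)) ((fderiv ℝ H (x, y)).comp (.inl ℝ E F)) x :=
    hH.hasFDerivAt.comp x (hasFDerivAt_prodMk_left x y)
  rw [h.fderiv]
  rfl

theorem fderiv_comp_prodMk_right_apply {H : E × F → G} {x : E} {y : F}
    (hH : DifferentiableAt ℝ H (x, y)) (v : F) :
    fderiv ℝ (fun y => H (x, y)) y v = fderiv ℝ H (x, y) (0, v) := by
  have h : HasFDerivAt (fun y => H (x, y)) ((fderiv ℝ H (x, y)).comp (.inr ℝ E F)) y :=
    hH.hasFDerivAt.comp y (hasFDerivAt_prodMk_right x y)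
  rw [h.fderiv]
  rfl

end PartialDerivative

theorem Matrix.dotProduct_mulVec_self_eq_zero {n R : Type*} [Fintype n] [CommRing R]
    [IsAddTorsionFree R] {S : Matrix n n R} (hS : Sᵀ = -S) (v : n → R) : v ⬝ᵥ S *ᵥ v = 0 := by
  refine self_eq_neg.mp ?_
  conv_lhs => rw [dotProduct_mulVec, ← mulVec_transpose, hS, neg_mulVec, neg_dotProduct,
    dotProduct_comm]

theorem adjoint_pavf_energy_preservation {d : ℕ}
    (H : (Fin d → ℝ) × (Fin d → ℝ) → ℝ) (hH : ContDiff ℝ 1 H)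
    (Hp Hq : (Fin d → ℝ) → (Fin d → ℝ) → (Fin d → ℝ))
    (hHp : ∀ p q i, Hp p q i = fderiv ℝ H (p, q) (Pi.single i 1, 0))
    (hHq : ∀ p q i, Hq p q i = fderiv ℝ H (p, q) (0, Pi.single i 1))
    (S : Matrix ((Fin d) ⊕ (Fin d)) ((Fin d) ⊕ (Fin d)) ℝ)
    (hS : S.transpose = -S)
    (τ : ℝ) (hτ : τ ≠ 0)
    (p0 p1 q0 q1 : Fin d → ℝ)
    (hupdate : ∀ j, τ⁻¹ • (Sum.elim (p1 - p0) (q1 - q0)) j =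
      S.mulVec (Sum.elim
        (fun i => ∫ ξ in (0:ℝ)..1, Hp (ξ • p1 + (1 - ξ) • p0) q1 i)
        (fun i => ∫ ξ in (0:ℝ)..1, Hq p0 (ξ • q1 + (1 - ξ) • q0) i)) j) :
    H (p1, q1) = H (p0, q0) := by
  set v := Sum.elim (fun i => ∫ ξ in (0:ℝ)..1, Hp (ξ • p1 + (1 - ξ) • p0) q1 i)
    (fun i => ∫ ξ in (0:ℝ)..1, Hq p0 (ξ • q1 + (1 - ξ) • q0) i)
  have hd := hH.differentiable one_ne_zero
  have hstep_p : H (p1, q1) - H (p0, q1) =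
      (p1 - p0) ⬝ᵥ fun i => ∫ ξ in (0:ℝ)..1, Hp (ξ • p1 + (1 - ξ) • p0) q1 i := by
    simp only [hHp, ← fderiv_comp_prodMk_left_apply (hd _)]
    exact sub_eq_dotProduct_integral_fderiv_single (hH.comp (contDiff_id.prodMk contDiff_const)) _ _
  have hstep_q : H (p0, q1) - H (p0, q0) =
      (q1 - q0) ⬝ᵥ fun i => ∫ ξ in (0:ℝ)..1, Hq p0 (ξ • q1 + (1 - ξ) • q0) i := by
    simp only [hHq, ← fderiv_comp_prodMk_right_apply (hd _)]
    exact sub_eq_dotProduct_integral_fderiv_single (hH.comp (contDiff_const.prodMk contDiff_id)) _ _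
  have hincrement : Sum.elim (p1 - p0) (q1 - q0) = τ • S *ᵥ v := by
    ext j
    rw [Pi.smul_apply, ← hupdate j, smul_eq_mul, smul_eq_mul, mul_inv_cancel_left₀ hτ]
  have henergy : H (p1, q1) - H (p0, q0) = τ * (v ⬝ᵥ S *ᵥ v) := by
    rw [← sub_add_sub_cancel _ (H (p0, q1)), hstep_p, hstep_q, ← sumElim_dotProduct_sumElim,
      hincrement, smul_dotProduct, smul_eq_mul, dotProduct_comm]
  rw [← sub_eq_zero, henergy, dotProduct_mulVec_self_eq_zero hS, mul_zero]
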